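/- Let 0 < q ≤ 1, γ̄ > 0, and define γ(θ,q) = γ̄·(1 - ((1-q²)/(1+q²))·cosθ). Then for all x ≥ 0, (1/π)·∫₀^π (1/γ(θ,q))·e^{-x/γ(θ,q)} dθ = ((1+q²)/(2q·γ̄))·exp(-(1+q²)²·x/(4q²·γ̄))·I₀((1-q⁴)·x/(4q²·γ̄)). That is, the mixture of exponential densities with means γ(θ,q), θ uniform on [0,π], equals the squared Hoyt density. -/

import Mathlib

/-!
The substitution `cos θ = (t - cos φ) / (1 - t cos φ)` with `t = (1 - q²) / (1 + q²)` maps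
`[0, π]` onto itself, turns `dθ / (1 - t cos θ)` into `dφ / √(1 - t²)` and `1 / (1 - t cos θ)`
into `(1 - t cos φ) / (1 - t²)`. The mixture thus becomes an exponential factor times
`∫₀^π exp (z cos φ) dφ`, and integrating the exponential series term by term
(`∫₀^π cos^(2m) = π (2m)! / (4^m (m!)²)`, odd powers give `0`) shows that this is `π I₀(z)`.
-/

open Real intervalIntegral

/-- Modified Bessel function of the first kind, order zero. -/
noncomputable def besselI0 (z : ℝ) : ℝ := ∑' n : ℕ, (z / 2) ^ (2 * n) / (n.factorial : ℝ) ^ 2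

open Set

theorem integral_cos_pow_odd (m : ℕ) : ∫ θ in (0 : ℝ)..π, cos θ ^ (2 * m + 1) = 0 := by
  induction m with
  | zero => simp
  | succ k ih => simp [show 2 * (k + 1) + 1 = 2 * k + 1 + 2 by ring, integral_cos_pow, ih]

theorem integral_cos_pow_even (m : ℕ) :
    ∫ θ in (0 : ℝ)..π, cos θ ^ (2 * m) =
      π * (2 * m).factorial / (4 ^ m * (m.factorial : ℝ) ^ 2) := by
  induction m with
  | zero => simp
  | succ k ih =>
    rw [show 2 * (k + 1) = 2 * k + 2 by ring, integral_cos_pow, ih, Nat.factorial_succ,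
      Nat.factorial_succ, show 2 * k + 1 = (2 * k).succ from rfl, Nat.factorial_succ]
    simp only [sin_pi, sin_zero, mul_zero, sub_zero, zero_div, zero_add]
    push_cast
    field_simp
    ring

theorem hasSum_besselI0 (z : ℝ) :
    HasSum (fun n : ℕ => (z / 2) ^ (2 * n) / (n.factorial : ℝ) ^ 2) (besselI0 z) := by
  refine (Summable.of_nonneg_of_le (fun n => by rw [pow_mul]; positivity) (fun n => ?_)
    (summable_pow_div_factorial ((z / 2) ^ 2))).hasSum
  rw [pow_mul, sq (n.factorial : ℝ)]
  exact div_le_div_of_nonneg_left (by positivity) (by positivity)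
    (le_mul_of_one_le_left (by positivity) (mod_cast n.factorial_pos))

theorem hasSum_integral_exp_mul_cos (z : ℝ) :
    HasSum (fun n : ℕ => ∫ θ in (0 : ℝ)..π, (z * cos θ) ^ n / n.factorial)
      (∫ θ in (0 : ℝ)..π, exp (z * cos θ)) := by
  refine hasSum_integral_of_dominated_convergence (fun n _ => |z| ^ n / n.factorial)
    (fun n => by fun_prop) (fun n => .of_forall fun θ _ => ?_)
    (.of_forall fun _ _ => summable_pow_div_factorial |z|) intervalIntegrable_const
    (.of_forall fun θ _ => ?_)
  · rw [norm_div, norm_pow, Real.norm_eq_abs, abs_mul, RCLike.norm_natCast]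
    gcongr
    exact mul_le_of_le_one_right (abs_nonneg z) (abs_cos_le_one θ)
  · rw [Real.exp_eq_exp_ℝ]
    exact NormedSpace.expSeries_div_hasSum_exp _

theorem integral_exp_mul_cos (z : ℝ) : ∫ θ in (0 : ℝ)..π, exp (z * cos θ) = π * besselI0 z := by
  set c : ℕ → ℝ := fun n => ∫ θ in (0 : ℝ)..π, (z * cos θ) ^ n / n.factorial with hc
  have hterm : ∀ n, c n = z ^ n / n.factorial * ∫ θ in (0 : ℝ)..π, cos θ ^ n := by
    intro n
    simp only [hc, ← integral_const_mul]
    congr 1 with θ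
    ring
  have heven : HasSum (fun m => c (2 * m)) (π * besselI0 z) := by
    refine ((hasSum_besselI0 z).mul_left π).congr_fun fun m => ?_
    rw [hterm, integral_cos_pow_even, pow_mul, pow_mul, div_pow]
    field_simp
    rw [← mul_pow]
    ring
  have hodd : HasSum (fun m => c (2 * m + 1)) 0 := by
    simp only [hterm, integral_cos_pow_odd, mul_zero, hasSum_zero]
  simpa using (hasSum_integral_exp_mul_cos z).unique (heven.even_add_odd hodd)

section Moebius

variable {t : ℝ}

theorem one_sub_mul_cos_pos (ht : |t| < 1) (θ : ℝ) : 0 < 1 - t * cos θ := by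
  have : |t * cos θ| ≤ |t| := by
    rw [abs_mul]
    exact mul_le_of_le_one_right (abs_nonneg t) (abs_cos_le_one θ)
  linarith [le_abs_self (t * cos θ)]

theorem abs_moebius_cos_le_one (ht : |t| < 1) (φ : ℝ) :
    |(t - cos φ) / (1 - t * cos φ)| ≤ 1 := by
  have hd := one_sub_mul_cos_pos ht φ
  rw [abs_div, abs_of_pos hd, div_le_one hd, abs_le]
  have := abs_lt.mp ht
  constructor <;> nlinarith [cos_le_one φ, neg_one_le_cos φ]

theorem hasDerivAt_arccos_moebius_cos {φ : ℝ} (ht : |t| < 1) (hφ : φ ∈ Ioo 0 π) :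
    HasDerivAt (fun φ => arccos ((t - cos φ) / (1 - t * cos φ)))
      (-(√(1 - t ^ 2) / (1 - t * cos φ))) φ := by
  have hd := one_sub_mul_cos_pos ht φ
  have hsin := sin_pos_of_pos_of_lt_pi hφ.1 hφ.2
  have ht2 : 0 < 1 - t ^ 2 := by nlinarith [abs_lt.mp ht]
  have hsq : 1 - ((t - cos φ) / (1 - t * cos φ)) ^ 2 =
      (√(1 - t ^ 2) * sin φ / (1 - t * cos φ)) ^ 2 := by
    rw [div_pow, div_pow, mul_pow, sq_sqrt ht2.le, sin_sq]
    field_simp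
    ring
  have hm : |(t - cos φ) / (1 - t * cos φ)| < 1 := by
    rw [← sq_lt_one_iff_abs_lt_one, ← sub_pos, hsq]
    positivity
  have hmoeb : HasDerivAt (fun φ => (t - cos φ) / (1 - t * cos φ))
      ((1 - t ^ 2) * sin φ / (1 - t * cos φ) ^ 2) φ := by
    refine (((hasDerivAt_cos φ).const_sub t).div
      ((hasDerivAt_cos φ).const_mul t |>.const_sub 1) hd.ne').congr_deriv ?_
    ring
  refine ((hasDerivAt_arccos (abs_lt.mp hm).1.ne' (abs_lt.mp hm).2.ne).comp φ hmoeb).congr_deriv ?_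
  rw [hsq, sqrt_sq (by positivity)]
  field_simp
  rw [sq_sqrt ht2.le]

theorem integral_eq_integral_comp_arccos_moebius_cos (ht : |t| < 1) {g : ℝ → ℝ}
    (hg : Continuous g) :
    ∫ θ in (0 : ℝ)..π, g θ =
      √(1 - t ^ 2) *
        ∫ φ in (0 : ℝ)..π, g (arccos ((t - cos φ) / (1 - t * cos φ))) / (1 - t * cos φ) := by
  have hd : ∀ φ, 1 - t * cos φ ≠ 0 := fun φ => (one_sub_mul_cos_pos ht φ).ne'
  have hsub := integral_comp_mul_deriv'' (a := 0) (b := π) (g := g)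
    (f := fun φ => arccos ((t - cos φ) / (1 - t * cos φ)))
    (f' := fun φ => -(√(1 - t ^ 2) / (1 - t * cos φ)))
    (continuous_arccos.comp (by fun_prop (disch := exact hd _))).continuousOn
    (fun φ hφ =>
      (hasDerivAt_arccos_moebius_cos ht (by simpa [pi_pos.le] using hφ)).hasDerivWithinAt)
    (Continuous.continuousOn (by fun_prop (disch := exact hd _))) hg.continuousOn
  have h1t : 1 - t ≠ 0 := by simpa using hd 0
  have h0 : (t - cos 0) / (1 - t * cos 0) = -1 := by
    rw [cos_zero, mul_one, ← neg_sub, neg_div, div_self h1t]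
  have hπ : (t - cos π) / (1 - t * cos π) = 1 := by
    rw [cos_pi, sub_neg_eq_add, mul_neg_one, sub_neg_eq_add, add_comm]
    exact div_self (by simpa [add_comm] using hd π)
  simp only [h0, hπ, arccos_neg_one, arccos_one, Function.comp_apply] at hsub
  rw [integral_symm 0 π] at hsub
  rw [← neg_neg (∫ θ in (0 : ℝ)..π, g θ), ← hsub, ← integral_const_mul, ← integral_neg]
  congr 1 with φ
  ring

theorem integral_comp_inv_one_sub_mul_cos_div (ht : |t| < 1) {F : ℝ → ℝ}
    (hF : Continuous F) :
    ∫ θ in (0 : ℝ)..π, F (1 - t * cos θ)⁻¹ / (1 - t * cos θ) =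
      (√(1 - t ^ 2))⁻¹ * ∫ φ in (0 : ℝ)..π, F ((1 - t * cos φ) / (1 - t ^ 2)) := by
  have hd : ∀ φ, 1 - t * cos φ ≠ 0 := fun φ => (one_sub_mul_cos_pos ht φ).ne'
  have ht2 : 0 < 1 - t ^ 2 := by nlinarith [abs_lt.mp ht]
  rw [integral_eq_integral_comp_arccos_moebius_cos ht (by fun_prop (disch := exact hd _))]
  have hcos : ∀ φ, 1 - t * cos (arccos ((t - cos φ) / (1 - t * cos φ))) =
      (1 - t ^ 2) / (1 - t * cos φ) := by
    intro φ
    have hm := abs_le.mp (abs_moebius_cos_le_one ht φ)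
    rw [cos_arccos hm.1 hm.2]
    field_simp [hd φ]
    ring
  simp only [hcos, inv_div]
  rw [← integral_const_mul, ← integral_const_mul]
  congr 1 with φ
  field_simp [hd φ]
  rw [sq_sqrt ht2.le]

theorem integral_exp_mixture_one_sub_mul_cos (ht : |t| < 1) (γ x : ℝ) :
    ∫ θ in (0 : ℝ)..π, 1 / (γ * (1 - t * cos θ)) * exp (-x / (γ * (1 - t * cos θ))) =
      π / (γ * √(1 - t ^ 2)) * exp (-x / (γ * (1 - t ^ 2))) *
        besselI0 (t * x / (γ * (1 - t ^ 2))) := by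
  have key := integral_comp_inv_one_sub_mul_cos_div ht
    (F := fun u => γ⁻¹ * exp (-x / γ * u)) (by fun_prop)
  have hexp : ∀ φ, γ⁻¹ * exp (-x / γ * ((1 - t * cos φ) / (1 - t ^ 2))) =
      γ⁻¹ * exp (-x / (γ * (1 - t ^ 2))) * exp (t * x / (γ * (1 - t ^ 2)) * cos φ) := by
    intro φ
    rw [mul_assoc, ← exp_add]
    congr 2
    field_simp
    ring
  simp only [hexp, integral_const_mul, integral_exp_mul_cos] at key
  convert key using 1
  · congr 1 with θ
    simp only [div_eq_mul_inv, mul_inv]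
    ring_nf
  · ring

end Moebius

theorem hoyt_pdf_mixture_general (q γbar x : ℝ) (hq0 : 0 < q) :
    (1 / π) * ∫ θ in (0:ℝ)..π,
        (1 / (γbar * (1 - (1 - q ^ 2) / (1 + q ^ 2) * Real.cos θ))) *
          Real.exp (-x / (γbar * (1 - (1 - q ^ 2) / (1 + q ^ 2) * Real.cos θ))) =
      ((1 + q ^ 2) / (2 * q * γbar)) * Real.exp (-((1 + q ^ 2) ^ 2 * x) / (4 * q ^ 2 * γbar)) *
        besselI0 ((1 - q ^ 4) * x / (4 * q ^ 2 * γbar)) := by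
  have hq2 : 0 < 1 + q ^ 2 := by positivity
  have ht : |(1 - q ^ 2) / (1 + q ^ 2)| < 1 := by
    rw [abs_div, abs_of_pos hq2, div_lt_one hq2, abs_lt]
    constructor <;> nlinarith
  have h1t : 1 - ((1 - q ^ 2) / (1 + q ^ 2)) ^ 2 = (2 * q / (1 + q ^ 2)) ^ 2 := by
    field_simp
    ring
  rw [integral_exp_mixture_one_sub_mul_cos ht, h1t, sqrt_sq (by positivity)]
  have hπ := pi_ne_zero
  field_simp
  ring_nf

theorem hoyt_pdf_mixture (q γbar x : ℝ) (hq0 : 0 < q) (hq1 : q ≤ 1) (hγ : 0 < γbar)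
    (hx : 0 ≤ x) :
    (1 / π) * ∫ θ in (0:ℝ)..π,
        (1 / (γbar * (1 - (1 - q ^ 2) / (1 + q ^ 2) * Real.cos θ))) *
          Real.exp (-x / (γbar * (1 - (1 - q ^ 2) / (1 + q ^ 2) * Real.cos θ))) =
      ((1 + q ^ 2) / (2 * q * γbar)) * Real.exp (-((1 + q ^ 2) ^ 2 * x) / (4 * q ^ 2 * γbar)) *
        besselI0 ((1 - q ^ 4) * x / (4 * q ^ 2 * γbar)) :=
  hoyt_pdf_mixture_general q γbar x hq0
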